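/- arXiv:1905.11709 — 2 statements merged into one kernel-verified Lean document; each statement's English description precedes it below -/
import Mathlib

section
/- Let β, C₂ > 0, λ ≥ 0, c_P > 0, C₁ > 0, and suppose a, b : [0,T] → [0,∞) with b continuously differentiable, b(0) = 0, satisfy for all t ∈ [0,T]: c_P a(t) ≤ C₁ √(a(t) b(t)) and β b'(t) + C₂ b(t) ≤ λ √(a(t) b(t)). Then b(t) = 0 and a(t) = 0 for all t ∈ [0,T]. -/
/-- Gronwall argument behind Case 2 (`α = 0`, `β > 0`) of the comparison
principle: `c_P a ≤ C₁ √(ab)` and `β b' + C₂ b ≤ λ √(ab)` with `b(0) = 0` force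
`a ≡ b ≡ 0` on `[0,T]`. -/
theorem stmt9 (β C₂ lam cP C₁ T : ℝ) (hβ : 0 < β) (hC₂ : 0 < C₂) (hlam : 0 ≤ lam)
    (hcP : 0 < cP) (hC₁ : 0 < C₁) (hT : 0 < T)
    (a b b' : ℝ → ℝ)
    (hbd : ∀ t ∈ Set.Icc (0:ℝ) T, HasDerivAt b (b' t) t)
    (hb'c : ContinuousOn b' (Set.Icc 0 T))
    (hann : ∀ t ∈ Set.Icc (0:ℝ) T, 0 ≤ a t) (hbnn : ∀ t ∈ Set.Icc (0:ℝ) T, 0 ≤ b t)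
    (hb0 : b 0 = 0)
    (hai : ∀ t ∈ Set.Icc (0:ℝ) T, cP * a t ≤ C₁ * Real.sqrt (a t * b t))
    (hbi : ∀ t ∈ Set.Icc (0:ℝ) T, β * b' t + C₂ * b t ≤ lam * Real.sqrt (a t * b t)) :
    ∀ t ∈ Set.Icc (0:ℝ) T, b t = 0 ∧ a t = 0 := by
  -- Step 1: √(a t * b t) ≤ (C₁/cP) * b t
  have hsqrt : ∀ t ∈ Set.Icc (0:ℝ) T, Real.sqrt (a t * b t) ≤ (C₁ / cP) * b t := by
    intro t ht
    set s := Real.sqrt (a t * b t) with hs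
    have hsnn : 0 ≤ s := Real.sqrt_nonneg _
    rcases eq_or_lt_of_le hsnn with h0 | hpos
    · rw [← h0]
      exact mul_nonneg (by positivity) (hbnn t ht)
    · have hs2 : s ^ 2 = a t * b t :=
        Real.sq_sqrt (mul_nonneg (hann t ht) (hbnn t ht))
      have ha_le : a t ≤ (C₁ / cP) * s := by
        have := hai t ht
        rw [div_mul_eq_mul_div, le_div_iff₀ hcP]
        linarith [hai t ht]
      have hsb : s ^ 2 ≤ (C₁ / cP) * s * b t := by
        rw [hs2]
        exact mul_le_mul_of_nonneg_right ha_le (hbnn t ht)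
      have h3 : s * s ≤ (C₁ / cP * b t) * s := by nlinarith
      exact le_of_mul_le_mul_right h3 hpos
  -- Step 2: b' t ≤ K * b t
  set K : ℝ := lam * C₁ / (cP * β) with hK
  have hKnn : 0 ≤ K := by positivity
  have hb' : ∀ t ∈ Set.Icc (0:ℝ) T, b' t ≤ K * b t := by
    intro t ht
    have h1 := hbi t ht
    have h2 : lam * Real.sqrt (a t * b t) ≤ lam * ((C₁ / cP) * b t) :=
      mul_le_mul_of_nonneg_left (hsqrt t ht) hlam
    have hb := hbnn t ht
    have h4 : β * b' t ≤ lam * (C₁ / cP * b t) := by nlinarith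
    have h5 := mul_le_mul_of_nonneg_left h4 hcP.le
    have h3 : cP * (β * b' t) ≤ lam * C₁ * b t := by
      calc cP * (β * b' t) ≤ cP * (lam * (C₁ / cP * b t)) := h5
        _ = lam * C₁ * b t := by field_simp
    rw [hK, div_mul_eq_mul_div, le_div_iff₀ (by positivity)]
    nlinarith [h3]
  -- Step 3: Gronwall via g = b * exp(-K t)
  set g : ℝ → ℝ := fun t => b t * Real.exp (-K * t) with hg
  have hgd : ∀ t ∈ Set.Icc (0:ℝ) T,
      HasDerivAt g ((b' t - K * b t) * Real.exp (-K * t)) t := by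
    intro t ht
    have he : HasDerivAt (fun x => Real.exp (-K * x)) (Real.exp (-K * t) * (-K * 1)) t :=
      (((hasDerivAt_id t).const_mul (-K))).exp
    have : HasDerivAt (fun y => b y * Real.exp (-K * y))
        (b' t * Real.exp (-K * t) + b t * (Real.exp (-K * t) * (-K * 1))) t := (hbd t ht).mul he
    convert this using 1
    ring
  have hgc : ContinuousOn g (Set.Icc 0 T) := by
    intro t ht
    exact ((hgd t ht).continuousAt).continuousWithinAt
  have hanti : AntitoneOn g (Set.Icc 0 T) := by
    apply antitoneOn_of_deriv_nonpos (convex_Icc 0 T) hgc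
    · intro t ht
      rw [interior_Icc] at ht
      exact (hgd t (Set.mem_Icc_of_Ioo ht)).differentiableAt.differentiableWithinAt
    · intro t ht
      rw [interior_Icc] at ht
      have ht' := Set.mem_Icc_of_Ioo ht
      rw [(hgd t ht').deriv]
      have := hb' t ht'
      have : b' t - K * b t ≤ 0 := by linarith
      have he : 0 < Real.exp (-K * t) := Real.exp_pos _
      nlinarith
  intro t ht
  have h0mem : (0:ℝ) ∈ Set.Icc (0:ℝ) T := Set.mem_Icc.2 ⟨le_refl 0, le_of_lt hT⟩
  have := hanti h0mem ht ht.1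
  have hg0 : g 0 = 0 := by simp [hg, hb0]
  have hgle : g t ≤ 0 := by rw [← hg0]; exact this
  have hbt : b t ≤ 0 := by
    have he : 0 < Real.exp (-K * t) := Real.exp_pos _
    have hble : b t * Real.exp (-K * t) ≤ 0 := hgle
    by_contra h
    push_neg at h
    nlinarith
  have hbz : b t = 0 := le_antisymm hbt (hbnn t ht)
  refine ⟨hbz, ?_⟩
  have := hai t ht
  rw [hbz, mul_zero, Real.sqrt_zero, mul_zero] at this
  have := hann t ht
  nlinarith
end

section
/- Let β > 0, B > 0, T > 0 and let H : [0,T] → ℝ be continuously differentiable with H(0) = 0, satisfying for all t: β (d/dt)(H(t)²)/2 + B H(t)² ≤ F(t) |H(t)| where F : [0,T] → [0,∞) is continuous. Then for all t ∈ [0,T], |H(t)| ≤ (1/β) ∫₀ᵗ e^{-(B/β)(t-s)} F(s) ds, and in particular ‖H‖_{L²(0,T)} ≤ (1/B) ‖F‖_{L²(0,T)}. -/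
open MeasureTheory


/-- the energy estimate: if `β (H²)'/2 + B H² ≤ F |H|` on `[0,T]` with
`H(0) = 0`, then `|H(t)| ≤ (1/β) ∫₀ᵗ e^{-(B/β)(t-s)} F(s) ds` and
`‖H‖_{L²(0,T)} ≤ (1/B) ‖F‖_{L²(0,T)}`. -/
theorem stmt17 (β B T : ℝ) (hβ : 0 < β) (hB : 0 < B) (hT : 0 < T)
    (H H' F : ℝ → ℝ)
    (hHd : ∀ t ∈ Set.Icc (0:ℝ) T, HasDerivAt H (H' t) t)
    (hH'c : ContinuousOn H' (Set.Icc 0 T))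
    (hH0 : H 0 = 0)
    (hFc : Continuous F) (hFnn : ∀ t, 0 ≤ F t)
    (hineq : ∀ t ∈ Set.Icc (0:ℝ) T,
      β * (2 * H t * H' t) / 2 + B * (H t)^2 ≤ F t * |H t|) :
    (∀ t ∈ Set.Icc (0:ℝ) T,
      |H t| ≤ (1/β) * ∫ s in (0:ℝ)..t, Real.exp (-(B/β) * (t - s)) * F s) ∧
    Real.sqrt (∫ t in (0:ℝ)..T, (H t)^2)
      ≤ (1/B) * Real.sqrt (∫ t in (0:ℝ)..T, (F t)^2) := by
  constructor
  · have hHc : ContinuousOn H (Set.Icc 0 T) := fun t ht =>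
      ((hHd t ht).continuousAt).continuousWithinAt
    set c : ℝ := B / β with hc
    have hcβ : β * c = B := by rw [hc]; field_simp
    set V : ℝ → ℝ := fun s => Real.exp (c*s) * H s with hV
    set Vd : ℝ → ℝ := fun s => Real.exp (c*s) * c * H s + Real.exp (c*s) * H' s with hVd'
    have hVdAt : ∀ t ∈ Set.Icc (0:ℝ) T, HasDerivAt V (Vd t) t := by
      intro t ht
      have h1 : HasDerivAt (fun s : ℝ => c*s) c t := by
        simpa using (hasDerivAt_id t).const_mul c
      have he : HasDerivAt (fun s => Real.exp (c*s)) (Real.exp (c*t) * c) t := h1.exp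
      exact he.mul (hHd t ht)
    have hexpc : Continuous fun x : ℝ => Real.exp (c*x) :=
      Real.continuous_exp.comp (continuous_const.mul continuous_id)
    set W : ℝ → ℝ := fun s => V s * V s with hW
    set Wd : ℝ → ℝ := fun s => Vd s * V s + V s * Vd s with hWd'
    have hWdAt : ∀ t ∈ Set.Icc (0:ℝ) T, HasDerivAt W (Wd t) t := fun t ht =>
      (hVdAt t ht).mul (hVdAt t ht)
    set a : ℝ → ℝ := fun s => (2/β) * (Real.exp (c*s) * F s) with ha
    have hann : ∀ s, 0 ≤ a s := fun s => by
      have := hFnn s; have := Real.exp_pos (c*s); positivity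
    have hac : Continuous a := by
      exact continuous_const.mul (hexpc.mul hFc)
    set g : ℝ → ℝ := fun s => a s * |V s| with hg
    have hVc : ContinuousOn V (Set.Icc 0 T) := (hexpc.continuousOn).mul hHc
    have hgc : ContinuousOn g (Set.Icc 0 T) := (hac.continuousOn).mul hVc.abs
    have hgnn : ∀ s, 0 ≤ g s := fun s => mul_nonneg (hann s) (abs_nonneg _)
    -- pointwise derivative bound
    have hWdle : ∀ s ∈ Set.Icc (0:ℝ) T, Wd s ≤ g s := by
      intro s hs
      have h1 : B * (H s)^2 + β * (H s * H' s) ≤ F s * |H s| := by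
        have := hineq s hs; linarith [this]
      have h1' : β * ((c)*(H s)^2 + H s * H' s) ≤ F s * |H s| := by
        have : β * ((c)*(H s)^2 + H s * H' s) = B * (H s)^2 + β * (H s * H' s) := by
          rw [mul_add, ← mul_assoc, hcβ]
        linarith [h1, this.ge, this.le]
      have he : (0:ℝ) < Real.exp (c*s) := Real.exp_pos _
      have hVabs : |V s| = Real.exp (c*s) * |H s| := by
        rw [hV]; simp [abs_mul, abs_of_pos he]
      have h2 := mul_le_mul_of_nonneg_left h1' (show (0:ℝ) ≤ 2 * Real.exp (c*s)^2 / β by positivity)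
      calc Wd s = (2 * Real.exp (c*s)^2 / β) * (β * ((c)*(H s)^2 + H s * H' s)) := by
            simp only [hWd', hVd', hV]; field_simp; ring
        _ ≤ (2 * Real.exp (c*s)^2 / β) * (F s * |H s|) := h2
        _ = g s := by simp only [hg, ha, hVabs]; field_simp
    -- Step A : W ≤ Y on Icc
    set Y : ℝ → ℝ := fun t => ∫ s in (0:ℝ)..t, g s with hY
    have hsub : ∀ t ∈ Set.Icc (0:ℝ) T, Set.uIcc (0:ℝ) t ⊆ Set.Icc 0 T := by
      intro t ht
      rw [Set.uIcc_of_le ht.1]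
      exact Set.Icc_subset_Icc le_rfl ht.2
    have hWdint : ∀ t ∈ Set.Icc (0:ℝ) T, IntervalIntegrable Wd volume 0 t := by
      intro t ht
      apply ContinuousOn.intervalIntegrable
      have hWdc : ContinuousOn Wd (Set.Icc 0 T) := by
        have hVdc : ContinuousOn Vd (Set.Icc 0 T) :=
          (((hexpc.continuousOn).mul continuousOn_const).mul hHc).add
            ((hexpc.continuousOn).mul hH'c)
        exact (hVdc.mul hVc).add (hVc.mul hVdc)
      exact hWdc.mono (hsub t ht)
    have hgint : ∀ t ∈ Set.Icc (0:ℝ) T, IntervalIntegrable g volume 0 t := by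
      intro t ht
      exact ContinuousOn.intervalIntegrable (hgc.mono (hsub t ht))
    have hWY : ∀ t ∈ Set.Icc (0:ℝ) T, W t ≤ Y t := by
      intro t ht
      have hW0 : W 0 = 0 := by simp [hW, hV, hH0]
      have hftc : ∫ s in (0:ℝ)..t, Wd s = W t - W 0 := by
        apply intervalIntegral.integral_eq_sub_of_hasDerivAt
        · intro x hx; exact hWdAt x (hsub t ht hx)
        · exact hWdint t ht
      have hmono : ∫ s in (0:ℝ)..t, Wd s ≤ ∫ s in (0:ℝ)..t, g s := by
        apply intervalIntegral.integral_mono_on ht.1 (hWdint t ht) (hgint t ht)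
        intro x hx
        exact hWdle x (Set.Icc_subset_Icc le_rfl ht.2 hx)
      rw [hY]; rw [hftc, hW0, sub_zero] at hmono; exact hmono
    -- primitive of a
    set A : ℝ → ℝ := fun u => ∫ s in (0:ℝ)..u, a s with hA
    have hAd : ∀ u : ℝ, HasDerivAt A (a u) u := fun u =>
      intervalIntegral.integral_hasDerivAt_right (hac.intervalIntegrable 0 u)
        (hac.stronglyMeasurableAtFilter volume (nhds u)) hac.continuousAt
    have hAc : Continuous A := by
      rw [continuous_iff_continuousAt]; exact fun u => (hAd u).continuousAt
    have hYc : ContinuousOn Y (Set.Icc 0 T) := by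
      have h1 : IntegrableOn g (Set.uIcc (0:ℝ) T) volume := by
        rw [Set.uIcc_of_le hT.le]; exact hgc.integrableOn_Icc
      have h2 := intervalIntegral.continuousOn_primitive_interval h1
      rwa [Set.uIcc_of_le hT.le] at h2
    have hYd : ∀ u ∈ Set.Ioo (0:ℝ) T, HasDerivAt Y (g u) u := by
      intro u hu
      have hca : ContinuousAt g u := hgc.continuousAt (Icc_mem_nhds hu.1 hu.2)
      exact intervalIntegral.integral_hasDerivAt_right (hgint u (Set.Ioo_subset_Icc_self hu))
        (ContinuousOn.stronglyMeasurableAtFilter isOpen_Ioo (hgc.mono Set.Ioo_subset_Icc_self) u hu)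
        hca
    have hYnn : ∀ u ∈ Set.Icc (0:ℝ) T, 0 ≤ Y u := fun u hu =>
      intervalIntegral.integral_nonneg hu.1 (fun x _ => hgnn x)
    -- main pointwise bound
    have main : ∀ t ∈ Set.Icc (0:ℝ) T, |V t| ≤ (1/2) * A t := by
      intro t ht
      have habs2 : |V t| ≤ Real.sqrt (Y t) := by
        rw [Real.le_sqrt (abs_nonneg _) (hYnn t ht)]
        calc |V t|^2 = V t * V t := by rw [sq_abs]; ring
          _ ≤ Y t := hWY t ht
      have hsuff : ∀ ε : ℝ, 0 < ε → Real.sqrt (Y t) ≤ (1/2) * A t + ε := by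
        intro ε hε
        set φ : ℝ → ℝ := fun u => (1/2) * A u - Real.sqrt (Y u + ε^2) with hφ
        have hφd : ∀ u ∈ Set.Ioo (0:ℝ) T,
            HasDerivAt φ ((1/2) * a u - 1 / (2 * Real.sqrt (Y u + ε^2)) * g u) u := by
          intro u hu
          have hpos : 0 < Y u + ε^2 := by
            have := hYnn u (Set.Ioo_subset_Icc_self hu); positivity
          have h1 := (hYd u hu).add_const (ε^2)
          have h2 : HasDerivAt (fun v => Real.sqrt (Y v + ε^2))
              (1 / (2 * Real.sqrt (Y u + ε^2)) * g u) u :=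
            (Real.hasDerivAt_sqrt hpos.ne').comp u h1
          exact ((hAd u).const_mul (1/2)).sub h2
        have hφdnn : ∀ u ∈ Set.Ioo (0:ℝ) T,
            0 ≤ (1/2) * a u - 1 / (2 * Real.sqrt (Y u + ε^2)) * g u := by
          intro u hu
          have hpos : 0 < Y u + ε^2 := by
            have := hYnn u (Set.Ioo_subset_Icc_self hu); positivity
          have hspos : 0 < Real.sqrt (Y u + ε^2) := Real.sqrt_pos.mpr hpos
          have hVle : |V u| ≤ Real.sqrt (Y u + ε^2) := by
            rw [Real.le_sqrt (abs_nonneg _) hpos.le]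
            calc |V u|^2 = V u * V u := by rw [sq_abs]; ring
              _ ≤ Y u := hWY u (Set.Ioo_subset_Icc_self hu)
              _ ≤ Y u + ε^2 := by nlinarith
          have h3 : g u ≤ a u * Real.sqrt (Y u + ε^2) := by
            simp only [hg]
            exact mul_le_mul_of_nonneg_left hVle (hann u)
          have h4 : 1 / (2 * Real.sqrt (Y u + ε^2)) * g u
              ≤ 1 / (2 * Real.sqrt (Y u + ε^2)) * (a u * Real.sqrt (Y u + ε^2)) := by
            apply mul_le_mul_of_nonneg_left h3; positivity
          have h5 : 1 / (2 * Real.sqrt (Y u + ε^2)) * (a u * Real.sqrt (Y u + ε^2))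
              = (1/2) * a u := by field_simp
          linarith
        have hmono : MonotoneOn φ (Set.Icc 0 T) := by
          apply monotoneOn_of_deriv_nonneg (convex_Icc 0 T)
          · exact (continuousOn_const.mul hAc.continuousOn).sub
              (Real.continuous_sqrt.comp_continuousOn (hYc.add continuousOn_const))
          · rw [interior_Icc]
            exact fun u hu => ((hφd u hu).differentiableAt).differentiableWithinAt
          · rw [interior_Icc]
            intro u hu
            rw [(hφd u hu).deriv]
            exact hφdnn u hu
        have h0 : φ 0 = -ε := by
          simp only [hφ, hA, hY, intervalIntegral.integral_same]
          rw [zero_add, Real.sqrt_sq hε.le]; ring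
        have hle := hmono (Set.left_mem_Icc.mpr hT.le) ht ht.1
        rw [h0] at hle
        simp only [hφ] at hle
        have hst : Real.sqrt (Y t) ≤ Real.sqrt (Y t + ε^2) := Real.sqrt_le_sqrt (by nlinarith)
        linarith
      by_contra hcon
      push_neg at hcon
      have h6 := hsuff ((|V t| - 1/2 * A t)/2) (by linarith)
      linarith
    -- conclusion
    intro t ht
    have hm := main t ht
    have hIval : A t = (2/β) * ∫ s in (0:ℝ)..t, Real.exp (c*s) * F s := by
      simp only [hA, ha]
      exact intervalIntegral.integral_const_mul _ _
    have hVt : |V t| = Real.exp (c*t) * |H t| := by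
      simp only [hV]; rw [abs_mul, abs_of_pos (Real.exp_pos _)]
    have hI : ∫ s in (0:ℝ)..t, Real.exp (-c * (t-s)) * F s
        = Real.exp (-(c*t)) * ∫ s in (0:ℝ)..t, Real.exp (c*s) * F s := by
      rw [← intervalIntegral.integral_const_mul]
      apply intervalIntegral.integral_congr
      intro x hx
      simp only
      rw [show -c * (t-x) = -(c*t) + c*x by ring, Real.exp_add]; ring
    have hfin : Real.exp (c*t) * |H t|
        ≤ (1/β) * ∫ s in (0:ℝ)..t, Real.exp (c*s) * F s := by
      rw [← hVt]; rw [hIval] at hm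
      have heq : 1/2 * (2/β * ∫ s in (0:ℝ)..t, Real.exp (c*s) * F s)
          = (1/β) * ∫ s in (0:ℝ)..t, Real.exp (c*s) * F s := by ring
      linarith
    calc |H t| = Real.exp (-(c*t)) * (Real.exp (c*t) * |H t|) := by
          rw [← mul_assoc, ← Real.exp_add]; simp
      _ ≤ Real.exp (-(c*t)) * ((1/β) * ∫ s in (0:ℝ)..t, Real.exp (c*s) * F s) :=
          mul_le_mul_of_nonneg_left hfin (Real.exp_nonneg _)
      _ = (1/β) * ∫ s in (0:ℝ)..t, Real.exp (-c * (t-s)) * F s := by rw [hI]; ring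
  · have hIcc : Set.uIcc (0:ℝ) T = Set.Icc 0 T := Set.uIcc_of_le hT.le
    have hHc : ContinuousOn H (Set.Icc 0 T) := fun t ht =>
      ((hHd t ht).continuousAt).continuousWithinAt
    -- integrabilities
    have hH2i : IntervalIntegrable (fun t => (H t)^2) volume 0 T := by
      apply ContinuousOn.intervalIntegrable; rw [hIcc]; exact hHc.pow 2
    have hF2i : IntervalIntegrable (fun t => (F t)^2) volume 0 T :=
      (hFc.pow 2).intervalIntegrable 0 T
    have hLHSi : IntervalIntegrable (fun t => β * (2 * H t * H' t) / 2 + B * (H t)^2) volume 0 T := by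
      apply ContinuousOn.intervalIntegrable; rw [hIcc]
      exact (((continuousOn_const.mul ((continuousOn_const.mul hHc).mul hH'c)).div_const 2).add
        (continuousOn_const.mul (hHc.pow 2)))
    have hFHi : IntervalIntegrable (fun t => F t * |H t|) volume 0 T := by
      apply ContinuousOn.intervalIntegrable; rw [hIcc]
      exact (hFc.continuousOn.mul hHc.abs)
    -- FTC for H^2
    have hFTC : ∫ t in (0:ℝ)..T, β * (2 * H t * H' t) / 2 = β/2 * (H T)^2 := by
      have h1 : ∫ t in (0:ℝ)..T, 2 * H t * H' t = (H T)^2 - (H 0)^2 := by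
        apply intervalIntegral.integral_eq_sub_of_hasDerivAt
        · intro x hx
          rw [hIcc] at hx
          simpa using (hHd x hx).fun_pow 2
        · apply ContinuousOn.intervalIntegrable; rw [hIcc]
          exact (continuousOn_const.mul hHc).mul hH'c
      have h2 : (fun t => β * (2 * H t * H' t) / 2) = fun t => (β/2) * (2 * H t * H' t) := by
        funext t; ring
      rw [h2, intervalIntegral.integral_const_mul, h1, hH0]; ring
    have key : B * ∫ t in (0:ℝ)..T, (H t)^2 ≤ ∫ t in (0:ℝ)..T, F t * |H t| := by
      have h1 : ∫ t in (0:ℝ)..T, (β * (2 * H t * H' t) / 2 + B * (H t)^2)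
          ≤ ∫ t in (0:ℝ)..T, F t * |H t| :=
        intervalIntegral.integral_mono_on hT.le hLHSi hFHi hineq
      rw [intervalIntegral.integral_add (by
        apply ContinuousOn.intervalIntegrable; rw [hIcc]
        exact ((continuousOn_const.mul ((continuousOn_const.mul hHc).mul hH'c)).div_const 2))
        (by apply ContinuousOn.intervalIntegrable; rw [hIcc]
            exact continuousOn_const.mul (hHc.pow 2)), hFTC,
        intervalIntegral.integral_const_mul] at h1
      nlinarith [sq_nonneg (H T)]
    have amgm : ∫ t in (0:ℝ)..T, F t * |H t|
        ≤ (1/(2*B)) * (∫ t in (0:ℝ)..T, (F t)^2) + (B/2) * ∫ t in (0:ℝ)..T, (H t)^2 := by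
      have h1 : ∫ t in (0:ℝ)..T, F t * |H t|
          ≤ ∫ t in (0:ℝ)..T, ((1/(2*B)) * (F t)^2 + (B/2) * (H t)^2) := by
        have hint2 : IntervalIntegrable (fun t => (1/(2*B)) * (F t)^2 + (B/2) * (H t)^2) volume 0 T := by
          apply ContinuousOn.intervalIntegrable; rw [hIcc]
          exact (continuousOn_const.mul ((hFc.pow 2).continuousOn)).add
            (continuousOn_const.mul (hHc.pow 2))
        apply intervalIntegral.integral_mono_on hT.le hFHi hint2
        intro x hx
        have h := sq_nonneg (F x - B * |H x|)
        have h2 : 2*B*(F x * |H x|) ≤ (F x)^2 + B^2 * |H x|^2 := by nlinarith [h]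
        have h2B : (0:ℝ) < 2*B := by positivity
        calc F x * |H x| = (2*B*(F x * |H x|))/(2*B) := by field_simp
          _ ≤ ((F x)^2 + B^2 * |H x|^2)/(2*B) := by
              exact (div_le_div_iff_of_pos_right h2B).mpr h2
          _ = 1/(2*B)*(F x)^2 + B/2*|H x|^2 := by field_simp
          _ = 1/(2*B)*(F x)^2 + B/2*(H x)^2 := by rw [sq_abs]
      rw [intervalIntegral.integral_add ((hF2i).const_mul _) ((hH2i).const_mul _),
        intervalIntegral.integral_const_mul, intervalIntegral.integral_const_mul] at h1
      exact h1
    -- combine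
    set X := ∫ t in (0:ℝ)..T, (H t)^2 with hX
    set G := ∫ t in (0:ℝ)..T, (F t)^2 with hG
    have hXnn : 0 ≤ X := intervalIntegral.integral_nonneg hT.le (fun u _ => sq_nonneg _)
    have hGnn : 0 ≤ G := intervalIntegral.integral_nonneg hT.le (fun u _ => sq_nonneg _)
    have hXG : X ≤ (1/B)^2 * G := by
      have hb2 : (0:ℝ) < B/2 := by positivity
      have h1 : (B/2) * X ≤ (1/(2*B)) * G := by linarith
      have h2 : X ≤ ((1/(2*B)) * G) / (B/2) := (le_div_iff₀' hb2).mpr h1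
      calc X ≤ ((1/(2*B)) * G) / (B/2) := h2
        _ = (1/B)^2 * G := by field_simp
    calc Real.sqrt X ≤ Real.sqrt ((1/B)^2 * G) := Real.sqrt_le_sqrt hXG
      _ = (1/B) * Real.sqrt G := by
          rw [Real.sqrt_mul (sq_nonneg _), Real.sqrt_sq (by positivity)]
end
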